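/- arXiv:1907.00806 — 2 statements merged into one kernel-verified Lean document; each statement's English description precedes it below -/
import Mathlib

section
/- Let K be an integer with 1 ≤ K ≤ N and λ_K > 0. Then the total squared error of approximating the samples by their expansion on the first K POD modes equals the sum of the discarded eigenvalues: Σ_{i=1}^N ‖u_i − Σ_{j=1}^K ⟨u_i, φ_j⟩ φ_j‖² = Σ_{s=K+1}^N λ_s. Moreover Σ_{i=1}^N ‖u_i‖² = Σ_{s=1}^N λ_s, so that whenever not all u_i are zero, the relative error satisfies (Σ_{i=1}^N ‖u_i − Σ_{j=1}^K ⟨u_i, φ_j⟩ φ_j‖²) / (Σ_{i=1}^N ‖u_i‖²) = (Σ_{s=K+1}^N λ_s) / (Σ_{s=1}^N λ_s). -/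
/-! Since the eigenvectors form an orthogonal matrix `V` with `σ Vᵀ = Vᵀ diag λ`, the trace of `σ`,
which is `∑ ‖u_i‖²`, equals `∑ λ_s`. The eigen-equation gives `⟪u_i, φ_s⟫ = √λ_s v^{(s)}_i`, so the
modes with `λ_s > 0` are orthonormal and capture the energy `∑_i ⟪u_i, φ_s⟫² = λ_s` each; by
Pythagoras the projection onto the first `K` modes leaves the error `∑_s λ_s - ∑_{s<K} λ_s`. -/

open RealInnerProductSpace Finset Matrix

theorem Matrix.trace_eq_sum_of_orthonormal_eigenvectors {ι R : Type*} [Fintype ι]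
    [DecidableEq ι] [CommRing R] (A : Matrix ι ι R) (lam : ι → R) (v : ι → ι → R)
    (heig : ∀ s, A *ᵥ v s = lam s • v s)
    (horth : ∀ s t, v s ⬝ᵥ v t = if s = t then 1 else 0) :
    A.trace = ∑ s, lam s := by
  set V : Matrix ι ι R := of v
  have hVVt : V * Vᵀ = 1 := by
    ext s t
    simpa [V, mul_apply, one_apply, dotProduct] using horth s t
  have hAVt : A * Vᵀ = Vᵀ * diagonal lam := by
    ext i s
    rw [mul_diagonal]
    simpa [V, mul_apply, mulVec, dotProduct, mul_comm] using congrFun (heig s) i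
  calc A.trace = (A * (Vᵀ * V)).trace := by rw [mul_eq_one_comm.mp hVVt, Matrix.mul_one]
    _ = (diagonal lam * (V * Vᵀ)).trace := by
      rw [← Matrix.mul_assoc, hAVt, Matrix.mul_assoc, trace_mul_comm, Matrix.mul_assoc]
    _ = ∑ s, lam s := by rw [hVVt, Matrix.mul_one, trace_diagonal]

theorem Orthonormal.norm_sub_sum_inner_smul_sq {ι E : Type*} [NormedAddCommGroup E]
    [InnerProductSpace ℝ E] {e : ι → E} (he : Orthonormal ℝ e) (s : Finset ι) (x : E) :
    ‖x - ∑ j ∈ s, ⟪e j, x⟫ • e j‖ ^ 2 = ‖x‖ ^ 2 - ∑ j ∈ s, ⟪e j, x⟫ ^ 2 := by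
  have hproj : ⟪x, ∑ j ∈ s, ⟪e j, x⟫ • e j⟫ = ∑ j ∈ s, ⟪e j, x⟫ ^ 2 := by
    simp only [inner_sum, real_inner_smul_right, real_inner_comm x, sq]
  have hnorm : ‖∑ j ∈ s, ⟪e j, x⟫ • e j‖ ^ 2 = ∑ j ∈ s, ⟪e j, x⟫ ^ 2 := by
    rw [← real_inner_self_eq_norm_sq, he.inner_sum]
    simp only [conj_trivial, sq]
  rw [norm_sub_sq_real, hproj, hnorm]
  ring

section POD

variable {ι H : Type*} [Fintype ι] [NormedAddCommGroup H] [InnerProductSpace ℝ H]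

noncomputable def podMode (u : ι → H) (μ : ℝ) (w : ι → ℝ) : H :=
  (Real.sqrt μ)⁻¹ • ∑ i, w i • u i

theorem inner_podMode {u : ι → H} {μ : ℝ} {w : ι → ℝ} (hw : gram ℝ u *ᵥ w = μ • w)
    (i : ι) : ⟪u i, podMode u μ w⟫ = Real.sqrt μ * w i := by
  have hGw : ⟪u i, ∑ k, w k • u k⟫ = μ * w i := by
    simpa [mulVec, dotProduct, gram_apply, inner_sum, real_inner_smul_right, mul_comm]
      using congrFun hw i
  rw [podMode, real_inner_smul_right, hGw, ← mul_assoc, ← div_eq_inv_mul, Real.div_sqrt]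

theorem orthonormal_podMode {κ : Type*} [DecidableEq κ] {u : ι → H} {lam : κ → ℝ}
    {v : κ → ι → ℝ} (heig : ∀ s, gram ℝ u *ᵥ v s = lam s • v s)
    (horth : ∀ s t, v s ⬝ᵥ v t = if s = t then 1 else 0) (hpos : ∀ s, 0 < lam s) :
    Orthonormal ℝ fun s => podMode u (lam s) (v s) := by
  rw [orthonormal_iff_ite]
  intro s t
  have hsqrt : Real.sqrt (lam s) ≠ 0 := (Real.sqrt_pos.mpr (hpos s)).ne'
  calc ⟪podMode u (lam s) (v s), podMode u (lam t) (v t)⟫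
      = (Real.sqrt (lam s))⁻¹ * Real.sqrt (lam t) * v s ⬝ᵥ v t := by
        nth_rewrite 1 [podMode]
        simp only [real_inner_smul_left, sum_inner, inner_podMode (heig t),
          dotProduct, mul_sum]
        exact sum_congr rfl fun i _ => by ring
    _ = if s = t then 1 else 0 := by
        rw [horth]
        split_ifs with hst
        · rw [hst, mul_one, inv_mul_cancel₀ (hst ▸ hsqrt)]
        · rw [mul_zero]

theorem sum_norm_sub_sum_inner_podMode_smul_sq {κ : Type*} [DecidableEq κ] {u : ι → H}
    {lam : κ → ℝ} {v : κ → ι → ℝ} (heig : ∀ s, gram ℝ u *ᵥ v s = lam s • v s)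
    (horth : ∀ s t, v s ⬝ᵥ v t = if s = t then 1 else 0) {S : Finset κ}
    (hS : ∀ j ∈ S, 0 < lam j) :
    ∑ i, ‖u i - ∑ j ∈ S, ⟪u i, podMode u (lam j) (v j)⟫ • podMode u (lam j) (v j)‖ ^ 2 =
      ∑ i, ‖u i‖ ^ 2 - ∑ j ∈ S, lam j := by
  have horthonormal : Orthonormal ℝ fun j : S => podMode u (lam j) (v j) :=
    orthonormal_podMode (fun j => heig j)
      (fun s t => by rw [horth]; exact if_congr Subtype.ext_iff.symm rfl rfl) (fun j => hS j j.2)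
  have hpythagoras : ∀ i,
      ‖u i - ∑ j ∈ S, ⟪u i, podMode u (lam j) (v j)⟫ • podMode u (lam j) (v j)‖ ^ 2 =
        ‖u i‖ ^ 2 - ∑ j ∈ S, ⟪u i, podMode u (lam j) (v j)⟫ ^ 2 := fun i => by
    rw [← sum_coe_sort S, ← sum_coe_sort S]
    simpa only [real_inner_comm (u i)] using horthonormal.norm_sub_sum_inner_smul_sq univ (u i)
  have henergy : ∀ j ∈ S, ∑ i, ⟪u i, podMode u (lam j) (v j)⟫ ^ 2 = lam j := fun j hj => by
    simp only [inner_podMode (heig j), mul_pow, Real.sq_sqrt (hS j hj).le, ← mul_sum,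
      sq (v j _)]
    rw [← dotProduct, horth, if_pos rfl, mul_one]
  rw [sum_congr rfl fun i _ => hpythagoras i, sum_sub_distrib, sum_comm, sum_congr rfl henergy]

theorem sum_norm_sq_eq_sum_eigenvalues [DecidableEq ι] {u : ι → H} {lam : ι → ℝ}
    {v : ι → ι → ℝ} (heig : ∀ s, gram ℝ u *ᵥ v s = lam s • v s)
    (horth : ∀ s t, v s ⬝ᵥ v t = if s = t then 1 else 0) :
    ∑ i, ‖u i‖ ^ 2 = ∑ s, lam s := by
  rw [← (gram ℝ u).trace_eq_sum_of_orthonormal_eigenvectors lam v heig horth]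
  simp only [trace, diag_apply, gram_apply, real_inner_self_eq_norm_sq]

end POD

/-- **POD error formula (Proposition 3.1 of the paper).** With the POD setup (samples
`u_1, …, u_N` in a real Hilbert space, Gram matrix `σ_{ij} = ⟪u_i, u_j⟫` with
eigenvalues `λ_1 ≥ … ≥ λ_N ≥ 0` and orthonormal eigenvectors `v^{(s)}`, POD modes
`φ_s = λ_s^{-1/2} Σ_i v^{(s)}_i u_i`), if `1 ≤ K ≤ N` and `λ_K > 0`, then the total
squared error of approximating the samples by their expansion on the first `K` POD
modes equals `Σ_{s>K} λ_s`; moreover `Σ_i ‖u_i‖² = Σ_s λ_s`, so when not all samples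
vanish the relative error equals `(Σ_{s>K} λ_s)/(Σ_s λ_s)`. -/
theorem pod_truncation_error
    {H : Type*} [NormedAddCommGroup H] [InnerProductSpace ℝ H]
    (N : ℕ) (u : Fin N → H)
    (lam : Fin N → ℝ) (v : Fin N → Fin N → ℝ)
    (hmono : Antitone lam)
    (heig : ∀ s : Fin N,
      (Matrix.of fun i j : Fin N => ⟪u i, u j⟫).mulVec (v s) = lam s • v s)
    (horth : ∀ s t : Fin N, ∑ i, v s i * v t i = if s = t then (1 : ℝ) else 0)
    (φ : Fin N → H)
    (hφ : ∀ s, φ s = (Real.sqrt (lam s))⁻¹ • ∑ i, v s i • u i)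
    (K : ℕ) (hK1 : 1 ≤ K) (hKN : K ≤ N)
    (hlamK : 0 < lam ⟨K - 1, by omega⟩) :
    (∑ i, ‖u i - ∑ j ∈ Finset.univ.filter (fun j : Fin N => (j : ℕ) < K),
        ⟪u i, φ j⟫ • φ j‖ ^ 2) =
      ∑ s ∈ Finset.univ.filter (fun s : Fin N => K ≤ (s : ℕ)), lam s ∧
    (∑ i, ‖u i‖ ^ 2) = ∑ s, lam s ∧
    ((∃ i, u i ≠ 0) →
      (∑ i, ‖u i - ∑ j ∈ Finset.univ.filter (fun j : Fin N => (j : ℕ) < K),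
          ⟪u i, φ j⟫ • φ j‖ ^ 2) / (∑ i, ‖u i‖ ^ 2) =
        (∑ s ∈ Finset.univ.filter (fun s : Fin N => K ≤ (s : ℕ)), lam s) /
          (∑ s, lam s)) := by
  obtain rfl : φ = fun s => podMode u (lam s) (v s) := funext hφ
  have hpos : ∀ j ∈ univ.filter (fun j : Fin N => (j : ℕ) < K), 0 < lam j := by
    intro j hj
    have hjK : (j : ℕ) ≤ K - 1 := by simp only [mem_filter, mem_univ, true_and] at hj; omega
    exact hlamK.trans_le (hmono (Fin.le_def.mpr hjK))
  have htotal : ∑ i, ‖u i‖ ^ 2 = ∑ s, lam s := sum_norm_sq_eq_sum_eigenvalues heig horth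
  have hdiscarded : ∑ s, lam s - ∑ j ∈ univ.filter (fun j : Fin N => (j : ℕ) < K), lam j =
      ∑ s ∈ univ.filter (fun s : Fin N => K ≤ (s : ℕ)), lam s := by
    rw [← sum_filter_add_sum_filter_not univ fun j : Fin N => (j : ℕ) < K, add_sub_cancel_left]
    simp only [not_lt]
  have herror := sum_norm_sub_sum_inner_podMode_smul_sq heig horth hpos
  rw [htotal, hdiscarded] at herror
  exact ⟨herror, htotal, fun _ => congrArg₂ (· / ·) herror htotal⟩
end

section
/- Let (Ω, F, P) be a probability space, A a real normed vector space, H a real Hilbert space, and T : A → H a map satisfying the Lipschitz bound ‖T(x) − T(y)‖ ≤ C_T ‖x − y‖ for all x, y ∈ A, where C_T ≥ 0. Let W ⊆ H be a closed subspace with orthogonal projection P_W : H → H, let δ₁, δ₂ ≥ 0, and let a_1, …, a_N ∈ A satisfy ‖T(a_i) − P_W(T(a_i))‖ ≤ δ₂ for every i = 1, …, N. Let a : Ω → A be a map such that ω ↦ ‖T(a(ω)) − P_W(T(a(ω)))‖ is measurable and ω ↦ min_{1 ≤ i ≤ N} ‖a(ω) − a_i‖ is measurable with E[min_{1 ≤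 i ≤ N} ‖a(ω) − a_i‖] ≤ δ₁. Then E[‖T(a(ω)) − P_W(T(a(ω)))‖] ≤ 2 C_T δ₁ + δ₂. -/
open MeasureTheory

/-!
Pick a sample `a_i` nearest to `a(ω)`. The triangle inequality through `T(a_i)` and
`P_W T(a_i)`, together with the `C_T`-Lipschitz bound on `T` and the fact that `P_W` is
`1`-Lipschitz, gives the pointwise estimate
`‖T(a(ω)) − P_W T(a(ω))‖ ≤ 2 C_T min_i ‖a(ω) − a_i‖ + δ₂`; taking expectations finishes.
-/

theorem LipschitzWith.dist_self_apply_le {E : Type*} [PseudoMetricSpace E] {K : NNReal}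
    {f : E → E} (hf : LipschitzWith K f) (u v : E) :
    dist u (f u) ≤ (1 + K) * dist u v + dist v (f v) :=
  calc dist u (f u) ≤ dist u v + dist v (f v) + dist (f v) (f u) := dist_triangle4 _ _ _ _
    _ ≤ dist u v + dist v (f v) + K * dist v u := by gcongr; exact hf.dist_le_mul v u
    _ = (1 + K) * dist u v + dist v (f v) := by rw [dist_comm v u]; ring

theorem dist_self_apply_le_iInf_dist {E A ι : Type*} [PseudoMetricSpace E] [PseudoMetricSpace A]
    [Finite ι] [Nonempty ι] {K : NNReal} {f : E → E} (hf : LipschitzWith K f)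
    {T : A → E} {C : ℝ} (hT : ∀ x y, dist (T x) (T y) ≤ C * dist x y)
    {b : ι → A} {δ : ℝ} (hb : ∀ i, dist (T (b i)) (f (T (b i))) ≤ δ) (x : A) :
    dist (T x) (f (T x)) ≤ (1 + K) * C * (⨅ i, dist x (b i)) + δ := by
  obtain ⟨i, hi⟩ := exists_eq_ciInf_of_finite (f := fun i => dist x (b i))
  calc dist (T x) (f (T x)) ≤ (1 + K) * dist (T x) (T (b i)) + δ :=
        (hf.dist_self_apply_le _ _).trans (by gcongr; exact hb i)
    _ ≤ (1 + K) * (C * dist x (b i)) + δ := by gcongr; exact hT _ _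
    _ = (1 + K) * C * (⨅ i, dist x (b i)) + δ := by rw [← hi]; ring

theorem integral_le_mul_integral_add {Ω : Type*} [MeasurableSpace Ω] {P : Measure Ω}
    [IsProbabilityMeasure P] {f g : Ω → ℝ} {c d : ℝ} (hf : AEStronglyMeasurable f P)
    (hf₀ : 0 ≤ f) (hg : Integrable g P) (hfg : ∀ ω, f ω ≤ c * g ω + d) :
    ∫ ω, f ω ∂P ≤ c * ∫ ω, g ω ∂P + d := by
  have hbound : Integrable (fun ω => c * g ω + d) P := (hg.const_mul c).add (integrable_const d)
  have hf_int : Integrable f P :=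
    hbound.mono' hf (.of_forall fun ω => (Real.norm_of_nonneg (hf₀ ω)).trans_le (hfg ω))
  calc ∫ ω, f ω ∂P ≤ ∫ ω, (c * g ω + d) ∂P := integral_mono hf_int hbound hfg
    _ = c * ∫ ω, g ω ∂P + d := by
      rw [integral_add (hg.const_mul c) (integrable_const d), integral_const_mul,
        integral_const, probReal_univ, one_smul]

theorem data_driven_basis_error_estimate_general
    {Ω : Type*} [MeasurableSpace Ω] (P : Measure Ω) [IsProbabilityMeasure P]
    {A : Type*} [NormedAddCommGroup A]
    {H : Type*} [NormedAddCommGroup H] [InnerProductSpace ℝ H]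
    (T : A → H) (CT : ℝ) (hCT : 0 ≤ CT)
    (hLip : ∀ x y : A, ‖T x - T y‖ ≤ CT * ‖x - y‖)
    (W : Submodule ℝ H) [CompleteSpace W]
    (δ₁ δ₂ : ℝ)
    (N : ℕ) (hN : 0 < N) (as : Fin N → A)
    (hsamples : ∀ i : Fin N, ‖T (as i) - (W.orthogonalProjectionOnto (T (as i)) : H)‖ ≤ δ₂)
    (a : Ω → A)
    (hmeas : Measurable fun ω => ‖T (a ω) - (W.orthogonalProjectionOnto (T (a ω)) : H)‖)
    (hmin_int : Integrable (fun ω => ⨅ i : Fin N, ‖a ω - as i‖) P)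
    (hδ₁bound : (∫ ω, (⨅ i : Fin N, ‖a ω - as i‖) ∂P) ≤ δ₁) :
    (∫ ω, ‖T (a ω) - (W.orthogonalProjectionOnto (T (a ω)) : H)‖ ∂P) ≤
      2 * CT * δ₁ + δ₂ := by
  have : Nonempty (Fin N) := ⟨⟨0, hN⟩⟩
  simp only [← dist_eq_norm] at hLip hsamples hmeas hmin_int hδ₁bound ⊢
  have hpointwise (ω : Ω) :
      dist (T (a ω)) (W.starProjection (T (a ω))) ≤ 2 * CT * (⨅ i, dist (a ω) (as i)) + δ₂ := by
    simpa only [NNReal.coe_one, one_add_one_eq_two] using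
      dist_self_apply_le_iInf_dist W.lipschitzWith_starProjection hLip hsamples (a ω)
  calc _ ≤ 2 * CT * (∫ ω, ⨅ i, dist (a ω) (as i) ∂P) + δ₂ :=
        integral_le_mul_integral_add hmeas.aestronglyMeasurable (fun _ => dist_nonneg)
          hmin_int hpointwise
    _ ≤ 2 * CT * δ₁ + δ₂ := by gcongr

/-- **Abstract form of the paper's main error theorem (Theorem 3.2).** Let `T : A → H`
be a `C_T`-Lipschitz map from a normed space of coefficients into a Hilbert space of
solutions, `W` a closed subspace of `H` with orthogonal projection `P_W`, and
`a_1, …, a_N` coefficient samples whose solutions are within `δ₂` of `W`. If the random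
coefficient `a(ω)` satisfies `E[min_i ‖a(ω) − a_i‖] ≤ δ₁`, then
`E[‖T(a(ω)) − P_W(T(a(ω)))‖] ≤ 2 C_T δ₁ + δ₂`. -/
theorem data_driven_basis_error_estimate
    {Ω : Type*} [MeasurableSpace Ω] (P : Measure Ω) [IsProbabilityMeasure P]
    {A : Type*} [NormedAddCommGroup A] [NormedSpace ℝ A]
    {H : Type*} [NormedAddCommGroup H] [InnerProductSpace ℝ H] [CompleteSpace H]
    (T : A → H) (CT : ℝ) (hCT : 0 ≤ CT)
    (hLip : ∀ x y : A, ‖T x - T y‖ ≤ CT * ‖x - y‖)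
    (W : Submodule ℝ H) [CompleteSpace W]
    (δ₁ δ₂ : ℝ) (hδ₁ : 0 ≤ δ₁) (hδ₂ : 0 ≤ δ₂)
    (N : ℕ) (hN : 0 < N) (as : Fin N → A)
    (hsamples : ∀ i : Fin N, ‖T (as i) - (W.orthogonalProjectionOnto (T (as i)) : H)‖ ≤ δ₂)
    (a : Ω → A)
    (hmeas : Measurable fun ω => ‖T (a ω) - (W.orthogonalProjectionOnto (T (a ω)) : H)‖)
    (hmin_int : Integrable (fun ω => ⨅ i : Fin N, ‖a ω - as i‖) P)
    (hδ₁bound : (∫ ω, (⨅ i : Fin N, ‖a ω - as i‖) ∂P) ≤ δ₁) :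
    (∫ ω, ‖T (a ω) - (W.orthogonalProjectionOnto (T (a ω)) : H)‖ ∂P) ≤
      2 * CT * δ₁ + δ₂ :=
  data_driven_basis_error_estimate_general P T CT hCT hLip W δ₁ δ₂ N hN as hsamples a hmeas hmin_int
    hδ₁bound
end
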